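/- arXiv:math/0508623 — 2 statements merged into one kernel-verified Lean document; each statement's English description precedes it below -/
import Mathlib

section
/- Let a ∈ PT_n. An element y ∈ PT_n satisfies u *_a y = 0 for every u ∈ PT_n (where 0 is the nowhere defined map) if and only if Z(y) ⊇ ran(a), i.e. y is a right annihilator of (PT_n, *_a) exactly when y is undefined on the whole image of a. -/
/-- `PT n`: partial transformations of an `n`-element set, modeled as maps
`Fin n → Option (Fin n)` (`none` = undefined). -/
abbrev PT (n : ℕ) := Fin n → Option (Fin n)

/-- Left-to-right composition of partial maps: `(x ⬝ y) i = y (x i)` when defined. -/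
def PT.comp {n : ℕ} (x y : PT n) : PT n := fun i => (x i).bind y

/-- Deformed multiplication by `a`: `x *_a y = x · a · y` (left-to-right). -/
def PT.dmul {n : ℕ} (a x y : PT n) : PT n := PT.comp (PT.comp x a) y

/-- The nowhere defined map `0`. -/
def PT.zero {n : ℕ} : PT n := fun _ => none

/-- `z_a`: the number of points where `a` is undefined. -/
def PT.zcard {n : ℕ} (a : PT n) : ℕ :=
  (Finset.univ.filter fun i : Fin n => a i = none).card

/-- `rank a = |ran a|`. -/
def PT.rank {n : ℕ} (a : PT n) : ℕ :=
  (Finset.univ.filter fun t : Fin n => ∃ i, a i = some t).card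

/-- `α_k(a)`: the number of points `t` whose full preimage `a⁻¹(t)` has exactly `k` elements. -/
def PT.typeCount {n : ℕ} (a : PT n) (k : ℕ) : ℕ :=
  (Finset.univ.filter fun t : Fin n =>
    (Finset.univ.filter fun i : Fin n => a i = some t).card = k).card

/-- A permutation regarded as a (total) partial transformation. -/
def PT.ofPerm {n : ℕ} (σ : Equiv.Perm (Fin n)) : PT n := fun i => some (σ i)

namespace PT

variable {n : ℕ}

theorem comp_assoc (x y z : PT n) : comp (comp x y) z = comp x (comp y z) :=
  funext fun i => Option.bind_assoc (x i) y z

theorem ofPerm_one_comp (x : PT n) : comp (ofPerm 1) x = x := rfl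

theorem comp_zero (x : PT n) : comp x zero = zero :=
  funext fun i => Option.bind_fun_none (x i)

theorem comp_eq_zero_iff {x y : PT n} :
    comp x y = zero ↔ ∀ i t : Fin n, x i = some t → y t = none := by
  simp only [funext_iff, comp, zero, Option.bind_eq_none_iff]

theorem dmul_eq_comp (a u y : PT n) : dmul a u y = comp u (comp a y) :=
  comp_assoc u a y

theorem forall_dmul_eq_zero_iff {a y : PT n} :
    (∀ u : PT n, dmul a u y = zero) ↔ comp a y = zero := by
  simp only [dmul_eq_comp]
  refine ⟨fun h => ?_, fun h u => by rw [h, comp_zero]⟩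
  simpa only [ofPerm_one_comp] using h (ofPerm 1)

end PT

/-- `y` is a right annihilator of `(PT n, *_a)` iff `Z(y) ⊇ ran a`. -/
theorem right_annihilator_iff {n : ℕ} (a y : PT n) :
    (∀ u : PT n, PT.dmul a u y = PT.zero) ↔
      (∀ i t : Fin n, a i = some t → y t = none) :=
  PT.forall_dmul_eq_zero_iff.trans PT.comp_eq_zero_iff
end

section
/- Let p(k) denote the number of partitions of the positive integer k into an unordered sum of positive integers, with p(0) = 1. Then the number of equivalence classes of the relation on PT_n given by 'a ≈ b iff (PT_n, *_a) and (PT_n, *_b) are isomorphic semigroups' equals ∑_{k=0}^{n} p(k); that is, there are exactly ∑_{k=0}^{n} p(k) pairwise non-isomorphic semigroups obtained from PT_n by deformed multiplication. -/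
/-!
The isomorphism type of `(PT n, *_a)` is determined by the multiset of fibre sizes `|a⁻¹(t)|`,
`t ∈ N`, and these multisets are exactly the partitions of the numbers `k ≤ n` padded with zeros.

If `a` and `b` have the same fibre sizes, then `b = τ a σ⁻¹` for permutations `σ, τ`, and
`x ↦ σ x τ⁻¹` is an isomorphism. Conversely, `|{x a y : y ∈ PT n}| = (n + 1) ^ rank (x a)`, so
`rank (x a)` is preserved by isomorphisms, hence so is the number of idempotents `x = x a x` with
`rank (x a) = p`. Such an idempotent is a section `s` of `a` over the `p`-set `ran (x a)`, on which
`x = s`, together with an arbitrary map from the remaining points to `ran s ∪ {undefined}`. Hence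
there are `e_p · (p + 1) ^ (n - p)` of them, where `e_p` is the `p`-th elementary symmetric function
of the fibre sizes, and the `e_p` determine the fibre sizes as the roots of `∏ (X + |a⁻¹(t)|)`.
-/

open Finset

section FiberCard

variable {α β : Type*} [Fintype α] [DecidableEq β]

theorem exists_equiv_comp_eq_of_card_fiber {f g : α → β}
    (h : ∀ y, Fintype.card {x // f x = y} = Fintype.card {x // g x = y}) :
    ∃ τ : α ≃ α, ∀ x, g (τ x) = f x :=
  ⟨Equiv.ofFiberEquiv fun y => Fintype.equivOfCardEq (h y), Equiv.ofFiberEquiv_map _⟩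

theorem exists_fun_card_fiber_eq [Fintype β] (ψ : β → ℕ) (hψ : ∑ y, ψ y = Fintype.card α) :
    ∃ f : α → β, ∀ y, Fintype.card {x // f x = y} = ψ y := by
  obtain ⟨e⟩ : Nonempty (α ≃ Σ y, Fin (ψ y)) := Fintype.card_eq.mp (by simp [hψ])
  refine ⟨fun x => (e x).1, fun y => ?_⟩
  rw [Fintype.card_congr ((e.subtypeEquiv fun _ => Iff.rfl).trans (Equiv.sigmaSubtype y)),
    Fintype.card_fin]

end FiberCard

namespace Multiset

theorem esymm_map_ringHom {R S : Type*} [CommSemiring R] [CommSemiring S] (f : R →+* S)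
    (s : Multiset R) (k : ℕ) : (s.map f).esymm k = f (s.esymm k) := by
  simp [esymm, powersetCard_map, map_multiset_sum, map_multiset_prod, map_map]

open Polynomial in
theorem eq_of_esymm_eq {R : Type*} [CommRing R] [IsDomain R] {s t : Multiset R}
    (hcard : card s = card t) (h : ∀ k, s.esymm k = t.esymm k) : s = t := by
  have hprod : (s.map fun r => X + C r).prod = (t.map fun r => X + C r).prod := by
    simp only [prod_X_add_C_eq_sum_esymm, hcard, h]
  have hroots (u : Multiset R) : (u.map fun r => X + C r).prod.roots = u.map Neg.neg := by
    simpa [sub_eq_add_neg, map_map, Function.comp_def] using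
      roots_multiset_prod_X_sub_C (u.map Neg.neg)
  exact map_injective neg_injective (by rw [← hroots, ← hroots, hprod])

theorem filter_ne_zero_add_replicate (s : Multiset ℕ) :
    s.filter (· ≠ 0) + replicate (card s - card (s.filter (· ≠ 0))) 0 = s := by
  have hzero : s.filter (¬ · ≠ 0) = replicate (card (s.filter (¬ · ≠ 0))) 0 :=
    eq_replicate_card.mpr fun b hb => by simpa using of_mem_filter hb
  conv_rhs => rw [← filter_add_not (· ≠ 0) s]
  have hcard := congrArg card (filter_add_not (· ≠ 0) s)
  rw [card_add] at hcard
  rw [hzero, ← hcard, Nat.add_sub_cancel_left]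

end Multiset

theorem Nat.Partition.sigma_ext {n : ℕ} {x y : Σ k : Fin (n + 1), Nat.Partition k}
    (h : x.2.parts = y.2.parts) : x = y := by
  obtain ⟨k, p⟩ := x
  obtain ⟨l, q⟩ := y
  obtain rfl : k = l := Fin.ext (by rw [← p.parts_sum, ← q.parts_sum, h])
  obtain rfl : p = q := Nat.Partition.ext h
  rfl

namespace PT

variable {n : ℕ}

def fiberCard (a : PT n) (t : Fin n) : ℕ := #{i | a i = some t}

def fiberSizes (a : PT n) : Multiset ℕ := univ.val.map a.fiberCard

def dom (x : PT n) : Finset (Fin n) := {i | x i ≠ none}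

def ran (x : PT n) : Finset (Fin n) := {t | ∃ i, x i = some t}

def restrict (x : PT n) (T : Finset (Fin n)) : PT n := fun t => if t ∈ T then x t else none

@[simp] lemma mem_dom {x : PT n} {i : Fin n} : i ∈ x.dom ↔ x i ≠ none := by simp [dom]

@[simp] lemma mem_ran {x : PT n} {t : Fin n} : t ∈ x.ran ↔ ∃ i, x i = some t := by simp [ran]

lemma rank_eq_card_ran (x : PT n) : x.rank = #x.ran := rfl

lemma card_fiberSizes (a : PT n) : Multiset.card a.fiberSizes = n := by simp [fiberSizes]

lemma card_subtype_eq_some (a : PT n) (t : Fin n) :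
    Fintype.card {i // a i = some t} = a.fiberCard t :=
  Fintype.card_subtype _

lemma count_fiberSizes (a : PT n) (k : ℕ) :
    a.fiberSizes.count k = Fintype.card {t // a.fiberCard t = k} := by
  rw [fiberSizes, Multiset.count_map, Fintype.card_subtype]
  simp only [eq_comm (a := k)]
  rfl

lemma card_undef_add_sum_fiberSizes (a : PT n) :
    Fintype.card {i // a i = none} + a.fiberSizes.sum = n := by
  rw [fiberSizes, sum_map_val]
  simp_rw [← card_subtype_eq_some]
  rw [← Fintype.sum_option (fun o => Fintype.card {i // a i = o}), ← Fintype.card_sigma,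
    Fintype.card_congr (Equiv.sigmaFiberEquiv a), Fintype.card_fin]

lemma sum_fiberSizes_le (a : PT n) : a.fiberSizes.sum ≤ n := by
  have := card_undef_add_sum_fiberSizes a
  omega

lemma arrowCongr_dmul (σ τ : Equiv.Perm (Fin n)) {a b : PT n} (hab : ∀ i, a (τ i) = (b i).map σ)
    (x y : PT n) :
    Equiv.arrowCongr σ.symm τ.symm.optionCongr (dmul a x y) =
      dmul b (Equiv.arrowCongr σ.symm τ.symm.optionCongr x)
        (Equiv.arrowCongr σ.symm τ.symm.optionCongr y) := by
  have hb (j : Fin n) : b j = (a (τ j)).map σ.symm := by simp [hab, Option.map_map]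
  funext i
  simp only [Equiv.arrowCongr_apply, Equiv.symm_symm, Function.comp_apply, Equiv.optionCongr_apply,
    dmul, comp]
  cases x (σ i) with
  | none => rfl
  | some v => cases h : a v <;> simp [hb, h]

theorem iso_of_fiberSizes_eq {a b : PT n} (h : a.fiberSizes = b.fiberSizes) :
    ∃ e : PT n ≃ PT n, ∀ x y : PT n, e (dmul a x y) = dmul b (e x) (e y) := by
  obtain ⟨σ, hσ⟩ : ∃ σ : Equiv.Perm (Fin n), ∀ t, a.fiberCard (σ t) = b.fiberCard t :=
    exists_equiv_comp_eq_of_card_fiber fun k => by rw [← count_fiberSizes, ← count_fiberSizes, h]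
  obtain ⟨τ, hτ⟩ : ∃ τ : Equiv.Perm (Fin n), ∀ i, a (τ i) = (b i).map σ := by
    refine exists_equiv_comp_eq_of_card_fiber fun o => ?_
    cases o with
    | none =>
      have hundef := (card_undef_add_sum_fiberSizes a).trans (card_undef_add_sum_fiberSizes b).symm
      simp only [Option.map_eq_none_iff]
      rw [h] at hundef
      omega
    | some t =>
      simp only [Option.map_eq_some_iff, ← Equiv.eq_symm_apply, exists_eq_right]
      rw [card_subtype_eq_some, card_subtype_eq_some, ← hσ, Equiv.apply_symm_apply]
  exact ⟨_, arrowCongr_dmul σ τ hτ⟩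

lemma comp_restrict_ran (c y : PT n) : comp c (y.restrict c.ran) = comp c y := by
  funext i
  simp only [comp, restrict]
  cases h : c i with
  | none => rfl
  | some t => exact if_pos (mem_ran.mpr ⟨i, h⟩)

theorem card_image_comp (c : PT n) : #(univ.image (comp c)) = (n + 1) ^ c.rank := by
  classical
  let S := Fintype.piFinset fun t => if t ∈ c.ran then (univ : Finset (Option (Fin n))) else {none}
  have hS (y : PT n) : y ∈ S ↔ ∀ t ∉ c.ran, y t = none := by
    simp only [S, Fintype.mem_piFinset]
    exact forall_congr' fun t => by split_ifs <;> simp [*]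
  have himage : univ.image (comp c) = S.image (comp c) := by
    refine (image_subset_iff.mpr fun y _ => mem_image.mpr ⟨y.restrict c.ran, ?_, ?_⟩).antisymm
      (image_subset_image (subset_univ S))
    · exact (hS _).mpr fun t ht => if_neg ht
    · exact comp_restrict_ran c y
  have hinj : Set.InjOn (comp c) S := by
    intro y hy y' hy' hyy'
    funext t
    by_cases ht : t ∈ c.ran
    · obtain ⟨i, hi⟩ := mem_ran.mp ht
      simpa [comp, hi] using congrFun hyy' i
    · rw [(hS y).mp hy t ht, (hS y').mp hy' t ht]
  rw [himage, card_image_of_injOn hinj, Fintype.card_piFinset, rank_eq_card_ran]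
  simp only [apply_ite card, card_univ, Fintype.card_option, Fintype.card_fin, card_singleton]
  rw [Fintype.prod_ite_mem, prod_const]

def IsSection (a s : PT n) : Prop := ∀ t v, s t = some v → a v = some t

instance (a s : PT n) : Decidable (IsSection a s) := by
  unfold IsSection
  infer_instance

def sectionsOfRank (a : PT n) (p : ℕ) : Finset (PT n) := {s | IsSection a s ∧ #s.dom = p}

@[simp] lemma mem_sectionsOfRank {a s : PT n} {p : ℕ} :
    s ∈ sectionsOfRank a p ↔ IsSection a s ∧ #s.dom = p := by
  simp [sectionsOfRank]

lemma filter_dom_sectionsOfRank {a : PT n} {p : ℕ} {T : Finset (Fin n)} (hT : #T = p) :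
    {s ∈ sectionsOfRank a p | s.dom = T} =
      Fintype.piFinset fun t => if t ∈ T then ({i | a i = some t} : Finset _).image some
        else {none} := by
  ext s
  simp only [mem_filter, mem_sectionsOfRank, IsSection, Fintype.mem_piFinset]
  constructor
  · rintro ⟨⟨hs, -⟩, rfl⟩ t
    split_ifs with ht
    · obtain ⟨v, hv⟩ := Option.ne_none_iff_exists'.mp (mem_dom.mp ht)
      simpa [hv] using hs t v hv
    · simpa using ht
  · intro h
    have hdom : s.dom = T := by
      ext t
      specialize h t
      split_ifs at h with ht
      · obtain ⟨i, -, hi⟩ := mem_image.mp h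
        simp [ht, ← hi]
      · simpa [ht] using h
    refine ⟨⟨fun t v hv => ?_, hdom ▸ hT⟩, hdom⟩
    have ht : t ∈ T := hdom ▸ mem_dom.mpr (by simp [hv])
    simpa [ht, hv] using h t

theorem card_sectionsOfRank (a : PT n) (p : ℕ) : #(sectionsOfRank a p) = a.fiberSizes.esymm p := by
  rw [fiberSizes, esymm_map_val, card_eq_sum_card_fiberwise (f := dom) (t := powersetCard p univ)
    fun s hs => mem_powersetCard.mpr ⟨subset_univ _, (mem_filter.mp hs).2.2⟩]
  refine sum_congr rfl fun T hT => ?_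
  rw [filter_dom_sectionsOfRank (mem_powersetCard.mp hT).2, Fintype.card_piFinset]
  simp only [apply_ite card, card_image_of_injective _ (Option.some_injective _), card_singleton]
  rw [Fintype.prod_ite_mem]
  rfl

lemma card_ran_of_isSection {a s : PT n} (hs : IsSection a s) : #s.ran = #s.dom := by
  refine card_nbij' (fun v => (a v).getD v) (fun t => (s t).getD t) ?_ ?_ ?_ ?_
  · intro v hv
    obtain ⟨t, ht⟩ := mem_ran.mp hv
    simp [hs t v ht, ht]
  · intro t ht
    obtain ⟨v, hv⟩ := Option.ne_none_iff_exists'.mp (mem_dom.mp ht)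
    simpa [hv] using ⟨t, hv⟩
  · intro v hv
    obtain ⟨t, ht⟩ := mem_ran.mp hv
    simp [hs t v ht, ht]
  · intro t ht
    obtain ⟨v, hv⟩ := Option.ne_none_iff_exists'.mp (mem_dom.mp ht)
    simp [hv, hs t v hv]

/-- For a section `s` of `a`: the idempotents `x = x a x` whose restriction to `ran (x a)`
is `s`. -/
def extensions (s : PT n) : Finset (PT n) :=
  Fintype.piFinset fun i => if i ∈ s.dom then {s i} else insert none (s.ran.image some)

lemma mem_extensions {s x : PT n} :
    x ∈ extensions s ↔
      ∀ i, (i ∈ s.dom → x i = s i) ∧ (i ∉ s.dom → ∀ v, x i = some v → v ∈ s.ran) := by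
  simp only [extensions, Fintype.mem_piFinset]
  refine forall_congr' fun i => ?_
  split_ifs with hi
  · simp [hi]
  · cases x i <;> simp [hi]

lemma card_extensions {a s : PT n} (hs : IsSection a s) :
    #(extensions s) = (#s.dom + 1) ^ (n - #s.dom) := by
  rw [extensions, Fintype.card_piFinset]
  simp only [apply_ite card, card_singleton,
    card_insert_of_notMem (by simp : none ∉ s.ran.image some),
    card_image_of_injective _ (Option.some_injective _), card_ran_of_isSection hs]
  rw [prod_ite, prod_const_one, one_mul, prod_const, filter_not, filter_mem_eq_inter, univ_inter,
    card_univ_sdiff, Fintype.card_fin]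

section Idempotents

variable {a x : PT n}

lemma exists_of_dmul_self (hx : dmul a x x = x) {i v : Fin n} (h : x i = some v) :
    ∃ t, a v = some t ∧ x t = some v := by
  have hi := congrFun hx i
  simp only [dmul, comp, h, Option.bind_some] at hi
  cases ha : a v <;> simp_all

lemma mem_ran_comp_of_dmul_self (hx : dmul a x x = x) {t : Fin n} :
    t ∈ (comp x a).ran ↔ ∃ v, x t = some v ∧ a v = some t := by
  rw [mem_ran]
  constructor
  · rintro ⟨i, hi⟩
    cases h : x i with
    | none => simp [comp, h] at hi
    | some v =>
      obtain ⟨t', ht', hxt'⟩ := exists_of_dmul_self hx h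
      obtain rfl : t' = t := by simpa [comp, h, ht'] using hi
      exact ⟨v, hxt', ht'⟩
  · rintro ⟨v, hv, hav⟩
    exact ⟨t, by simp [comp, hv, hav]⟩

lemma isSection_restrict_ran_comp (hx : dmul a x x = x) :
    IsSection a (x.restrict (comp x a).ran) := by
  intro t v h
  simp only [restrict] at h
  split_ifs at h with ht
  obtain ⟨v', hv', hav'⟩ := (mem_ran_comp_of_dmul_self hx).mp ht
  rw [h, Option.some_inj] at hv'
  rwa [hv']

lemma dom_restrict_ran_comp (hx : dmul a x x = x) :
    (x.restrict (comp x a).ran).dom = (comp x a).ran := by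
  ext t
  simp only [mem_dom, restrict]
  split_ifs with ht
  · obtain ⟨v, hv, -⟩ := (mem_ran_comp_of_dmul_self hx).mp ht
    simp [hv, ht]
  · simp [ht]

lemma mem_extensions_restrict_ran_comp (hx : dmul a x x = x) :
    x ∈ extensions (x.restrict (comp x a).ran) := by
  rw [mem_extensions, dom_restrict_ran_comp hx]
  refine fun i => ⟨fun hi => by simp [restrict, hi], fun _ v hv => ?_⟩
  obtain ⟨t, hat, hxt⟩ := exists_of_dmul_self hx hv
  have ht : t ∈ (comp x a).ran := (mem_ran_comp_of_dmul_self hx).mpr ⟨v, hxt, hat⟩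
  exact mem_ran.mpr ⟨t, by simp [restrict, ht, hxt]⟩

lemma of_mem_extensions {s : PT n} (hs : IsSection a s) (hx : x ∈ extensions s) :
    dmul a x x = x ∧ (comp x a).ran = s.dom ∧ x.restrict (comp x a).ran = s := by
  rw [mem_extensions] at hx
  have hxs {t v : Fin n} (h : s t = some v) : x t = some v :=
    ((hx t).1 (mem_dom.mpr (by simp [h]))).trans h
  have hran {i v : Fin n} (h : x i = some v) : ∃ t, s t = some v := by
    by_cases hi : i ∈ s.dom
    · exact ⟨i, ((hx i).1 hi).symm.trans h⟩
    · exact mem_ran.mp ((hx i).2 hi v h)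
  have hidem : dmul a x x = x := by
    funext i
    cases h : x i with
    | none => simp [dmul, comp, h]
    | some v =>
      obtain ⟨t, ht⟩ := hran h
      simp [dmul, comp, h, hs t v ht, hxs ht]
  have hranc : (comp x a).ran = s.dom := by
    ext t
    rw [mem_ran_comp_of_dmul_self hidem, mem_dom]
    constructor
    · rintro ⟨v, hv, hav⟩
      obtain ⟨t', ht'⟩ := hran hv
      obtain rfl : t = t' := by simpa [hav] using hs t' v ht'
      simp [ht']
    · intro ht
      obtain ⟨v, hv⟩ := Option.ne_none_iff_exists'.mp ht
      exact ⟨v, hxs hv, hs t v hv⟩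
  refine ⟨hidem, hranc, funext fun t => ?_⟩
  simp only [restrict, hranc]
  split_ifs with ht
  · exact (hx t).1 ht
  · exact (not_not.mp (mt mem_dom.mpr ht)).symm

end Idempotents

def idempotentsOfRank (a : PT n) (p : ℕ) : Finset (PT n) :=
  {x | dmul a x x = x ∧ (comp x a).rank = p}

@[simp] lemma mem_idempotentsOfRank {a x : PT n} {p : ℕ} :
    x ∈ idempotentsOfRank a p ↔ dmul a x x = x ∧ (comp x a).rank = p := by
  simp [idempotentsOfRank]

lemma filter_restrict_eq_extensions {a s : PT n} {p : ℕ} (hs : s ∈ sectionsOfRank a p) :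
    {x ∈ idempotentsOfRank a p | x.restrict (comp x a).ran = s} = extensions s := by
  obtain ⟨hsec, rfl⟩ := mem_sectionsOfRank.mp hs
  ext x
  simp only [mem_filter, mem_idempotentsOfRank, rank_eq_card_ran]
  constructor
  · rintro ⟨⟨hx, -⟩, rfl⟩
    exact mem_extensions_restrict_ran_comp hx
  · intro hx
    obtain ⟨hidem, hran, hrestrict⟩ := of_mem_extensions hsec hx
    exact ⟨⟨hidem, by rw [hran]⟩, hrestrict⟩

theorem card_idempotentsOfRank (a : PT n) (p : ℕ) :
    #(idempotentsOfRank a p) = a.fiberSizes.esymm p * (p + 1) ^ (n - p) := by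
  have hmaps : ∀ x ∈ idempotentsOfRank a p, x.restrict (comp x a).ran ∈ sectionsOfRank a p := by
    intro x hx
    obtain ⟨hidem, hrank⟩ := mem_idempotentsOfRank.mp hx
    exact mem_sectionsOfRank.mpr
      ⟨isSection_restrict_ran_comp hidem, by rw [dom_restrict_ran_comp hidem, ← hrank]; rfl⟩
  rw [← card_sectionsOfRank, card_eq_sum_card_fiberwise hmaps]
  refine sum_const_nat fun s hs => ?_
  rw [filter_restrict_eq_extensions hs, card_extensions (mem_sectionsOfRank.mp hs).1,
    (mem_sectionsOfRank.mp hs).2]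

section Isomorphism

variable {a b : PT n} (e : PT n ≃ PT n) (he : ∀ x y : PT n, e (dmul a x y) = dmul b (e x) (e y))
include he

theorem rank_comp_apply_eq (x : PT n) : (comp (e x) b).rank = (comp x a).rank := by
  have hcard : #(univ.image (comp (comp (e x) b))) = #(univ.image (comp (comp x a))) := by
    calc #(univ.image (comp (comp (e x) b)))
        = #(univ.image fun y => dmul b (e x) (e y)) := by
          conv_lhs => rw [← image_univ_equiv e, image_image]
          rfl
      _ = #((univ.image (comp (comp x a))).image e) := by
          simp_rw [← he, image_image]
          rfl
      _ = #(univ.image (comp (comp x a))) := card_image_of_injective _ e.injective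
  rw [card_image_comp, card_image_comp] at hcard
  rcases Nat.eq_zero_or_pos n with rfl | hn
  · rw [rank_eq_card_ran, rank_eq_card_ran, Subsingleton.elim (comp (e x) b).ran]
  · exact Nat.pow_right_injective (by omega) hcard

theorem card_idempotentsOfRank_eq (p : ℕ) :
    #(idempotentsOfRank a p) = #(idempotentsOfRank b p) :=
  card_equiv e fun x => by
    simp only [mem_idempotentsOfRank, ← he, e.injective.eq_iff, rank_comp_apply_eq e he]

theorem fiberSizes_eq_of_iso : a.fiberSizes = b.fiberSizes := by
  have hesymm (p : ℕ) : a.fiberSizes.esymm p = b.fiberSizes.esymm p := by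
    have hcard := card_idempotentsOfRank_eq e he p
    rw [card_idempotentsOfRank, card_idempotentsOfRank] at hcard
    exact Nat.eq_of_mul_eq_mul_right (by positivity) hcard
  refine Multiset.map_injective (f := Nat.castRingHom ℤ) Nat.cast_injective
    (Multiset.eq_of_esymm_eq (by simp [card_fiberSizes]) fun p => ?_)
  rw [Multiset.esymm_map_ringHom, Multiset.esymm_map_ringHom, hesymm]

end Isomorphism

theorem iso_iff_fiberSizes_eq {a b : PT n} :
    (∃ e : PT n ≃ PT n, ∀ x y : PT n, e (dmul a x y) = dmul b (e x) (e y)) ↔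
      a.fiberSizes = b.fiberSizes :=
  ⟨fun ⟨e, he⟩ => fiberSizes_eq_of_iso e he, iso_of_fiberSizes_eq⟩

lemma exists_fiberSizes_eq {M : Multiset ℕ} (hcard : Multiset.card M = n) (hsum : M.sum ≤ n) :
    ∃ a : PT n, a.fiberSizes = M := by
  obtain ⟨φ, rfl⟩ : ∃ φ : Fin n → ℕ, univ.val.map φ = M := by
    obtain ⟨e⟩ : Nonempty (Fin n ≃ M) := Fintype.card_eq.mp (by simp [hcard])
    refine ⟨fun i => e i, ?_⟩
    conv_rhs => rw [← M.map_univ_coe, ← Multiset.map_univ_val_equiv e, Multiset.map_map]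
    rfl
  obtain ⟨a, ha⟩ := exists_fun_card_fiber_eq (α := Fin n)
    (fun o : Option (Fin n) => o.elim (n - (univ.val.map φ).sum) φ) (by
      simp only [Fintype.sum_option, sum_map_val, Option.elim_none, Option.elim_some,
        Fintype.card_fin] at hsum ⊢
      omega)
  exact ⟨a, congrArg (univ.val.map ·) (funext fun t => by rw [← card_subtype_eq_some, ha]; rfl)⟩

def fiberPartition (a : PT n) : Σ k : Fin (n + 1), Nat.Partition k :=
  ⟨⟨a.fiberSizes.sum, Nat.lt_succ_of_le a.sum_fiberSizes_le⟩, .ofSums _ a.fiberSizes rfl⟩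

theorem fiberPartition_eq_iff {a b : PT n} :
    a.fiberPartition = b.fiberPartition ↔ a.fiberSizes = b.fiberSizes := by
  refine ⟨fun h => ?_, fun h => Nat.Partition.sigma_ext (by simp [fiberPartition, h])⟩
  have hparts : a.fiberSizes.filter (· ≠ 0) = b.fiberSizes.filter (· ≠ 0) :=
    congrArg (·.2.parts) h
  rw [← a.fiberSizes.filter_ne_zero_add_replicate, ← b.fiberSizes.filter_ne_zero_add_replicate,
    card_fiberSizes, card_fiberSizes, hparts]

theorem fiberPartition_surjective : Function.Surjective (fiberPartition (n := n)) := by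
  rintro ⟨k, q⟩
  have hcard : Multiset.card q.parts ≤ n := by
    have := Multiset.card_nsmul_le_sum (s := q.parts) (a := 1) fun x hx => q.parts_pos hx
    simp only [smul_eq_mul, mul_one, q.parts_sum] at this
    omega
  obtain ⟨a, ha⟩ := exists_fiberSizes_eq (n := n)
    (M := q.parts + Multiset.replicate (n - Multiset.card q.parts) 0)
    (by simp only [Multiset.card_add, Multiset.card_replicate]; omega)
    (by
      simp only [Multiset.sum_add, q.parts_sum, Multiset.sum_replicate, nsmul_zero, add_zero]
      omega)
  refine ⟨a, Nat.Partition.sigma_ext ?_⟩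
  simp only [fiberPartition, ha, Nat.Partition.ofSums_parts, Multiset.filter_add,
    Multiset.filter_eq_self.mpr fun x hx => (q.parts_pos hx).ne', add_eq_left,
    Multiset.filter_eq_nil, Decidable.not_not]
  exact fun x hx => Multiset.eq_of_mem_replicate hx

end PT

/-- There are exactly `∑_{k=0}^{n} p(k)` pairwise non-isomorphic semigroups obtained from
`PT n` by deformed multiplication: the relation `a ≈ b` iff `(PT n, *_a) ≅ (PT n, *_b)` has
exactly `∑_{k=0}^{n} p(k)` equivalence classes, witnessed by a surjection onto
`Fin (∑ p(k))` whose fibers are the classes. -/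
theorem card_iso_classes {n : ℕ} :
    ∃ f : PT n → Fin (∑ k ∈ Finset.range (n + 1), Fintype.card (Nat.Partition k)),
      Function.Surjective f ∧
        ∀ a b : PT n, f a = f b ↔
          ∃ e : PT n ≃ PT n, ∀ x y : PT n, e (PT.dmul a x y) = PT.dmul b (e x) (e y) := by
  let E : (Σ k : Fin (n + 1), Nat.Partition k) ≃
      Fin (∑ k ∈ Finset.range (n + 1), Fintype.card (Nat.Partition k)) :=
    Fintype.equivFinOfCardEq (by
      rw [Fintype.card_sigma, Fin.sum_univ_eq_sum_range (fun k => Fintype.card (Nat.Partition k))])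
  refine ⟨E ∘ PT.fiberPartition, E.surjective.comp PT.fiberPartition_surjective, fun a b => ?_⟩
  rw [Function.comp_apply, Function.comp_apply, E.apply_eq_iff_eq, PT.fiberPartition_eq_iff,
    PT.iso_iff_fiberSizes_eq]
end
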